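/- The realizations 𝔚₁ and 𝔚₂ (with α = 0) of the Witt algebra in ℝ² are inequivalent: there is no diffeomorphism Φ of ℝ² such that Φ_* L_n = L̃_n for all n ∈ ℤ, where L_n(t,x) = (e^{−nt}, 0) (i.e. L_n = e^{−nt}∂_t) and L̃_n(t,x) = (e^{−nt}, n e^{−nt}) (i.e. L̃_n = e^{−nt}∂_t + n e^{−nt}∂_x). -/

import Mathlib

/-!
At every point all the `L_n` are multiples of `∂_t`, so the differential of `Φ` sends them to
multiples of a single vector, whereas `L̃₀ = ∂_t` and `L̃₁ = e^{-t} (∂_t + ∂_x)` are linearly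
independent at every point.
-/

/-- The realization `𝔚₁` on `ℝ²`: `L_n = e^{-nt} ∂_t`. -/
noncomputable def W1field (n : ℤ) : ℝ × ℝ → ℝ × ℝ := fun p =>
  (Real.exp (-(n : ℝ) * p.1), 0)

/-- The realization `𝔚₂` with `α = 0` on `ℝ²`: `L̃_n = e^{-nt} ∂_t + n e^{-nt} ∂_x`. -/
noncomputable def W2field0 (n : ℤ) : ℝ × ℝ → ℝ × ℝ := fun p =>
  (Real.exp (-(n : ℝ) * p.1), (n : ℝ) * Real.exp (-(n : ℝ) * p.1))

lemma W1field_eq_smul_W1field_zero (n : ℤ) (q : ℝ × ℝ) :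
    W1field n q = Real.exp (-(n : ℝ) * q.1) • W1field 0 q := by
  simp [W1field]

lemma W2field0_zero (p : ℝ × ℝ) : W2field0 0 p = (1, 0) := by
  simp [W2field0]

lemma W2field0_one_snd (p : ℝ × ℝ) : (W2field0 1 p).2 = Real.exp (-p.1) := by
  simp [W2field0]

lemma not_forall_map_W1field_eq_W2field0 (L : ℝ × ℝ →ₗ[ℝ] ℝ × ℝ) (q p : ℝ × ℝ) :
    ¬ ∀ n : ℤ, L (W1field n q) = W2field0 n p := by
  intro h
  have h_one := h 1
  rw [W1field_eq_smul_W1field_zero, map_smul, h 0, W2field0_zero] at h_one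
  have h_snd := congrArg Prod.snd h_one
  rw [W2field0_one_snd] at h_snd
  simp only [Prod.smul_mk, smul_zero] at h_snd
  exact (Real.exp_pos _).ne h_snd

/-- The realizations `𝔚₁` and `𝔚₂` (with `α = 0`) of the Witt algebra in `ℝ²` are
inequivalent: there is no `C^∞` diffeomorphism `Φ` of `ℝ²` (with `C^∞` inverse `Ψ`)
whose pushforward `(Φ_* X)(p) = (DΦ)(Φ⁻¹(p))(X(Φ⁻¹(p)))` maps `L_n` to `L̃_n` for all
`n ∈ ℤ`. -/
theorem W1_W2_inequivalent :
    ¬ ∃ Φ Ψ : ℝ × ℝ → ℝ × ℝ,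
        ContDiff ℝ (⊤ : ℕ∞) Φ ∧ ContDiff ℝ (⊤ : ℕ∞) Ψ ∧
        Function.LeftInverse Ψ Φ ∧ Function.RightInverse Ψ Φ ∧
        ∀ (n : ℤ) (p : ℝ × ℝ),
          fderiv ℝ Φ (Ψ p) (W1field n (Ψ p)) = W2field0 n p := by
  rintro ⟨Φ, Ψ, -, -, -, -, h⟩
  exact not_forall_map_W1field_eq_W2field0 (fderiv ℝ Φ (Ψ 0)).toLinearMap (Ψ 0) 0 (h · 0)
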